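/- arXiv:1003.2725 — 5 statements merged into one kernel-verified Lean document; each statement's English description precedes it below -/
import Mathlib

section
/- Let n be a finite index type. The squaring map q(A) = A * A, restricted to the set S = {A : Matrix n n ℂ | A is positive semidefinite}, is a homeomorphism of S onto itself: q maps S bijectively onto S, q is continuous, and its inverse (the positive semidefinite square root map A ↦ √A) is continuous with respect to the subspace topology on S. -/
/-!
In any C⋆-algebra, squaring is a bijection of the positive cone onto itself whose inverse is the
continuous-functional-calculus square root, and that square root is continuous on the cone.
Complex matrices form a C⋆-algebra under the `L²` operator norm, which induces the usual topology;
there the functional-calculus square root is `U √D Uᴴ` for a spectral decomposition `A = U D Uᴴ`.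
-/

open scoped ComplexOrder

namespace CFC

variable {A : Type*} [NonUnitalCStarAlgebra A] [PartialOrder A] [StarOrderedRing A]

noncomputable def sqHomeomorph : {a : A // 0 ≤ a} ≃ₜ {a : A // 0 ≤ a} where
  toFun a := ⟨a * a, by simpa [a.2.isSelfAdjoint.star_eq] using star_mul_self_nonneg (a : A)⟩
  invFun a := ⟨sqrt a, sqrt_nonneg (a : A)⟩
  left_inv a := Subtype.ext (sqrt_mul_self (a : A) a.2)
  right_inv a := Subtype.ext (sqrt_mul_sqrt_self (a : A) a.2)
  continuous_toFun := by fun_prop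
  continuous_invFun :=
    continuousOn_iff_continuous_domRestrict.mp continuousOn_sqrt |>.subtype_mk _

end CFC

namespace Matrix

open scoped MatrixOrder Matrix.Norms.L2Operator

variable {n : Type*} [Fintype n] [DecidableEq n]

lemma PosSemidef.cfcSqrt_eq {A : Matrix n n ℂ} (hA : A.PosSemidef) :
    CFC.sqrt A = (hA.1.eigenvectorUnitary : Matrix n n ℂ) *
      diagonal ((↑) ∘ Real.sqrt ∘ hA.1.eigenvalues : n → ℂ) *
      (star hA.1.eigenvectorUnitary : Matrix n n ℂ) := by
  rw [CFC.sqrt_eq_real_sqrt A hA.nonneg, cfcₙ_eq_cfc, hA.1.cfc_eq]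
  rfl

noncomputable def posSemidefSqHomeomorph :
    {A : Matrix n n ℂ // A.PosSemidef} ≃ₜ {A : Matrix n n ℂ // A.PosSemidef} :=
  let e : {A : Matrix n n ℂ // A.PosSemidef} ≃ₜ {A : Matrix n n ℂ // 0 ≤ A} :=
    Homeomorph.setCongr (Set.ext fun _ => nonneg_iff_posSemidef.symm)
  e.trans (CFC.sqHomeomorph.trans e.symm)

end Matrix

/-- The squaring map `A ↦ A * A` on the set of positive semidefinite complex
matrices is a homeomorphism of this set onto itself, whose inverse is the
positive semidefinite square root map. -/
theorem squaring_homeomorph_posSemidef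
    {n : Type*} [Fintype n] [DecidableEq n] :
    ∃ q : {A : Matrix n n ℂ // A.PosSemidef} ≃ₜ {A : Matrix n n ℂ // A.PosSemidef},
      (∀ A : {A : Matrix n n ℂ // A.PosSemidef},
        (q A : Matrix n n ℂ) = (A : Matrix n n ℂ) * (A : Matrix n n ℂ)) ∧
      (∀ A : {A : Matrix n n ℂ // A.PosSemidef},
        (q.symm A : Matrix n n ℂ) = (A.2.1.eigenvectorUnitary : Matrix n n ℂ) *
          Matrix.diagonal ((↑) ∘ Real.sqrt ∘ A.2.1.eigenvalues : n → ℂ) *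
          (star A.2.1.eigenvectorUnitary : Matrix n n ℂ)) :=
  ⟨Matrix.posSemidefSqHomeomorph, fun _ => rfl, fun A => A.2.cfcSqrt_eq⟩
end

section
/- Let n be a finite index type and let (A_k) be a sequence of positive semidefinite matrices in Matrix n n ℂ such that the sequence of squares (A_k * A_k) converges to some matrix B. Then there is a subsequence of (A_k) that converges to a positive semidefinite matrix C, and this limit satisfies C * C = B. -/
/-!
Squaring is a bijection of the positive cone of a C⋆-algebra whose inverse, the continuous
functional calculus square root, is continuous. Hence `A k = √(A k * A k) → √B`: the whole
sequence converges, so the identity is already a suitable subsequence.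
-/

open scoped ComplexOrder

open Filter Topology

theorem CFC.tendsto_sqrt_of_tendsto_mul_self {A : Type*} [NonUnitalCStarAlgebra A]
    [PartialOrder A] [StarOrderedRing A] {ι : Type*} {l : Filter ι} [l.NeBot] {a : ι → A} {b : A}
    (ha : ∀ i, 0 ≤ a i) (h : Tendsto (fun i => a i * a i) l (𝓝 b)) :
    0 ≤ b ∧ Tendsto a l (𝓝 (CFC.sqrt b)) := by
  have hsq : ∀ i, 0 ≤ a i * a i := fun i => (ha i).isSelfAdjoint.mul_self_nonneg
  have hb : 0 ≤ b := ge_of_tendsto' h hsq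
  refine ⟨hb, ?_⟩
  have hsqrt := (CFC.continuousOn_sqrt b hb).tendsto.comp
    (tendsto_nhdsWithin_iff.2 ⟨h, Eventually.of_forall hsq⟩)
  simpa [Function.comp_def, CFC.sqrt_mul_self _ (ha _)] using hsqrt

open scoped MatrixOrder Matrix.Norms.L2Operator in
theorem Matrix.tendsto_sqrt_of_tendsto_mul_self {n : Type*} [Fintype n] [DecidableEq n]
    {ι : Type*} {l : Filter ι} [l.NeBot] {A : ι → Matrix n n ℂ} {B : Matrix n n ℂ}
    (hA : ∀ i, (A i).PosSemidef) (h : Tendsto (fun i => A i * A i) l (𝓝 B)) :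
    (CFC.sqrt B).PosSemidef ∧ Tendsto A l (𝓝 (CFC.sqrt B)) ∧ CFC.sqrt B * CFC.sqrt B = B := by
  obtain ⟨hB, hlim⟩ := CFC.tendsto_sqrt_of_tendsto_mul_self (fun i => (hA i).nonneg) h
  exact ⟨nonneg_iff_posSemidef.1 (CFC.sqrt_nonneg B), hlim, CFC.sqrt_mul_sqrt_self B hB⟩

/-- If `(A k)` is a sequence of positive semidefinite complex matrices whose
squares converge to `B`, then some subsequence of `(A k)` converges to a
positive semidefinite matrix `C` with `C * C = B`. -/
theorem posSemidef_subseq_of_sq_tendsto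
    {n : Type*} [Fintype n] (A : ℕ → Matrix n n ℂ) (B : Matrix n n ℂ)
    (hA : ∀ k, (A k).PosSemidef)
    (hconv : Filter.Tendsto (fun k => A k * A k) Filter.atTop (nhds B)) :
    ∃ (φ : ℕ → ℕ) (C : Matrix n n ℂ), StrictMono φ ∧ C.PosSemidef ∧
      Filter.Tendsto (fun k => A (φ k)) Filter.atTop (nhds C) ∧ C * C = B := by
  classical
  exact ⟨id, _, strictMono_id, Matrix.tendsto_sqrt_of_tendsto_mul_self hA hconv⟩
end

section
/- Let n be a finite nonempty index type. The set T = {A : Matrix n n ℂ | A is positive semidefinite and trace A = 1} is closed in Matrix n n ℂ, and T equals the closure of the set {A : Matrix n n ℂ | A is positive definite and trace A = 1}. In particular, the positive definite matrices of trace 1 are dense in the positive semidefinite matrices of trace 1. -/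
/-!
Both conditions defining `{A | A.PosSemidef ∧ A.trace = 1}` are closed, so this set contains the
closure of its positive definite part. Conversely, for `A` in it and `D = (card n)⁻¹ • 1`, the open
segment from `A` to `D` consists of positive definite matrices of trace one, and `A` lies in its
closure.
-/

open scoped ComplexOrder

open Matrix

namespace Matrix

variable {n 𝕜 : Type*} [RCLike 𝕜]

theorem openSegment_subset_setOf_posDef {A B : Matrix n n 𝕜} (hA : A.PosSemidef)
    (hB : B.PosDef) : openSegment ℝ A B ⊆ {C | C.PosDef} := by
  rintro _ ⟨a, b, ha, hb, -, rfl⟩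
  exact PosDef.posSemidef_add (hA.smul ha.le) (hB.smul hb)

variable [Fintype n]

theorem isClosed_setOf_posSemidef : IsClosed {A : Matrix n n 𝕜 | A.PosSemidef} := by
  simp only [posSemidef_iff_dotProduct_mulVec, Set.ofPred_and, Set.ofPred_forall]
  exact (isClosed_eq continuous_id.matrix_conjTranspose continuous_id).inter <|
    isClosed_iInter fun x ↦ isClosed_le continuous_const <|
      continuous_const.dotProduct (continuous_id.matrix_mulVec continuous_const)

theorem isClosed_setOf_trace_eq (c : 𝕜) : IsClosed {A : Matrix n n 𝕜 | A.trace = c} :=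
  isClosed_eq (traceLinearMap n 𝕜 𝕜).continuous_of_finiteDimensional continuous_const

theorem convex_setOf_trace_eq (c : 𝕜) : Convex ℝ {A : Matrix n n 𝕜 | A.trace = c} :=
  (convex_singleton c).linear_preimage (traceLinearMap n ℝ 𝕜)

variable [DecidableEq n] [Nonempty n]

theorem posDef_inv_card_smul_one : ((Fintype.card n : ℝ)⁻¹ • (1 : Matrix n n 𝕜)).PosDef :=
  PosDef.one.smul (by positivity)

theorem trace_inv_card_smul_one : ((Fintype.card n : ℝ)⁻¹ • (1 : Matrix n n 𝕜)).trace = 1 := by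
  rw [trace_smul, trace_one, RCLike.real_smul_eq_coe_mul]
  push_cast
  exact inv_mul_cancel₀ (by simp)

theorem posSemidef_traceOne_subset_closure_posDef_traceOne :
    {A : Matrix n n 𝕜 | A.PosSemidef ∧ A.trace = 1} ⊆
      closure {A : Matrix n n 𝕜 | A.PosDef ∧ A.trace = 1} := by
  rintro A ⟨hA, htr⟩
  set D : Matrix n n 𝕜 := (Fintype.card n : ℝ)⁻¹ • 1
  have hsegment : openSegment ℝ A D ⊆ {A | A.PosDef ∧ A.trace = 1} := fun _ hC ↦
    ⟨openSegment_subset_setOf_posDef hA posDef_inv_card_smul_one hC,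
      (convex_setOf_trace_eq 1).segment_subset htr trace_inv_card_smul_one
        (openSegment_subset_segment ℝ A D hC)⟩
  exact closure_mono hsegment (segment_subset_closure_openSegment (left_mem_segment ℝ A D))

end Matrix

/-- The set of positive semidefinite complex matrices of trace 1 is closed and
coincides with the closure of the set of positive definite matrices of trace 1. -/
theorem posSemidef_traceOne_eq_closure_posDef_traceOne
    {n : Type*} [Fintype n] [DecidableEq n] [Nonempty n] :
    IsClosed {A : Matrix n n ℂ | A.PosSemidef ∧ A.trace = 1} ∧
    {A : Matrix n n ℂ | A.PosSemidef ∧ A.trace = 1} =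
      closure {A : Matrix n n ℂ | A.PosDef ∧ A.trace = 1} := by
  have hclosed : IsClosed {A : Matrix n n ℂ | A.PosSemidef ∧ A.trace = 1} :=
    isClosed_setOf_posSemidef.inter (isClosed_setOf_trace_eq 1)
  refine ⟨hclosed, subset_antisymm posSemidef_traceOne_subset_closure_posDef_traceOne ?_⟩
  exact closure_minimal (fun A hA ↦ ⟨hA.1.posSemidef, hA.2⟩) hclosed
end

section
/- Let n be a finite nonempty index type. The map A ↦ (re (trace A))⁻¹ • A is a homeomorphism from the set {A : Matrix n n ℂ | A positive definite and det A = 1} onto the set {A : Matrix n n ℂ | A positive definite and trace A = 1}: it is a continuous bijection between these sets and its inverse is continuous. -/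
/-!
Both slices are cross-sections of the cone of positive definite matrices under positive real
scaling. Each normalization `A ↦ tr(A)⁻¹ • A` and `A ↦ det(A)^(-1/n) • A` is invariant under
positive scaling and fixes its own slice, so each undoes the other; both are continuous because
trace and determinant are continuous and positive on the cone.
-/

open scoped ComplexOrder

lemma Complex.ofReal_re_of_pos {z : ℂ} (hz : 0 < z) : (z.re : ℂ) = z :=
  (Complex.eq_re_of_ofReal_le (r := 0) (by simpa using hz.le)).symm

namespace Matrix

variable {n : Type*} [Fintype n]

lemma re_trace_real_smul (c : ℝ) (A : Matrix n n ℂ) : (c • A).trace.re = c * A.trace.re := by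
  simp [trace_smul]

lemma re_det_real_smul [DecidableEq n] (c : ℝ) (A : Matrix n n ℂ) :
    (c • A).det.re = c ^ Fintype.card n * A.det.re := by
  rw [← Complex.coe_smul, det_smul, ← Complex.ofReal_pow, Complex.re_ofReal_mul]

lemma PosDef.re_trace_pos [Nonempty n] {A : Matrix n n ℂ} (hA : A.PosDef) : 0 < A.trace.re :=
  (Complex.pos_iff.1 hA.trace_pos).1

lemma PosDef.re_det_pos [DecidableEq n] {A : Matrix n n ℂ} (hA : A.PosDef) : 0 < A.det.re :=
  (Complex.pos_iff.1 hA.det_pos).1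

noncomputable def traceNormalize (A : Matrix n n ℂ) : Matrix n n ℂ := A.trace.re⁻¹ • A

lemma traceNormalize_real_smul {c : ℝ} (hc : c ≠ 0) (A : Matrix n n ℂ) :
    traceNormalize (c • A) = traceNormalize A := by
  rw [traceNormalize, traceNormalize, re_trace_real_smul, smul_smul, mul_inv,
    mul_right_comm, inv_mul_cancel₀ hc, one_mul]

lemma traceNormalize_of_trace_eq_one {A : Matrix n n ℂ} (hA : A.trace = 1) :
    traceNormalize A = A := by
  simp [traceNormalize, hA]

lemma PosDef.traceNormalize [Nonempty n] {A : Matrix n n ℂ} (hA : A.PosDef) :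
    A.traceNormalize.PosDef :=
  hA.smul (inv_pos.2 hA.re_trace_pos)

lemma PosDef.trace_traceNormalize [Nonempty n] {A : Matrix n n ℂ} (hA : A.PosDef) :
    A.traceNormalize.trace = 1 := by
  rw [Matrix.traceNormalize, ← Complex.coe_smul, trace_smul, ← Complex.ofReal_re_of_pos hA.trace_pos,
    smul_eq_mul, Complex.ofReal_re, ← Complex.ofReal_mul,
    inv_mul_cancel₀ hA.re_trace_pos.ne', Complex.ofReal_one]

lemma continuousOn_traceNormalize :
    ContinuousOn (traceNormalize : Matrix n n ℂ → Matrix n n ℂ) {A | A.trace.re ≠ 0} :=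
  ((Complex.continuous_re.comp continuous_id.matrix_trace).continuousOn.inv₀ fun _ h => h).smul
    continuousOn_id

variable [DecidableEq n]

noncomputable def detNormalize (A : Matrix n n ℂ) : Matrix n n ℂ :=
  A.det.re ^ (-(Fintype.card n : ℝ)⁻¹) • A

lemma detNormalize_real_smul [Nonempty n] {c : ℝ} (hc : 0 < c) {A : Matrix n n ℂ}
    (hA : 0 ≤ A.det.re) : detNormalize (c • A) = detNormalize A := by
  have hN : (Fintype.card n : ℝ) ≠ 0 := by positivity
  rw [detNormalize, detNormalize, re_det_real_smul, smul_smul,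
    Real.mul_rpow (by positivity) hA, ← Real.rpow_natCast, ← Real.rpow_mul hc.le,
    mul_neg, mul_inv_cancel₀ hN, Real.rpow_neg_one, mul_right_comm, inv_mul_cancel₀ hc.ne',
    one_mul]

lemma detNormalize_of_det_eq_one {A : Matrix n n ℂ} (hA : A.det = 1) : detNormalize A = A := by
  simp [detNormalize, hA]

lemma PosDef.detNormalize {A : Matrix n n ℂ} (hA : A.PosDef) : A.detNormalize.PosDef :=
  hA.smul (Real.rpow_pos_of_pos hA.re_det_pos _)

lemma PosDef.det_detNormalize [Nonempty n] {A : Matrix n n ℂ} (hA : A.PosDef) :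
    A.detNormalize.det = 1 := by
  have hN : (Fintype.card n : ℝ) ≠ 0 := by positivity
  rw [← Complex.ofReal_re_of_pos hA.detNormalize.det_pos, Matrix.detNormalize, re_det_real_smul,
    ← Real.rpow_natCast, ← Real.rpow_mul hA.re_det_pos.le, neg_mul, inv_mul_cancel₀ hN,
    Real.rpow_neg_one, inv_mul_cancel₀ hA.re_det_pos.ne', Complex.ofReal_one]

lemma continuousOn_detNormalize :
    ContinuousOn (detNormalize : Matrix n n ℂ → Matrix n n ℂ) {A | A.det.re ≠ 0} :=
  ((Complex.continuous_re.comp continuous_id.matrix_det).continuousOn.rpow_const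
    fun _ h => Or.inl h).smul continuousOn_id

end Matrix

open Matrix

/-- The map `A ↦ (re (trace A))⁻¹ • A` is a homeomorphism from the set of
positive definite complex matrices of determinant 1 onto the set of positive
definite matrices of trace 1. -/
theorem posDef_detOne_homeomorph_traceOne
    {n : Type*} [Fintype n] [DecidableEq n] [Nonempty n] :
    ∃ h : {A : Matrix n n ℂ // A.PosDef ∧ A.det = 1} ≃ₜ
          {A : Matrix n n ℂ // A.PosDef ∧ A.trace = 1},
      ∀ A : {A : Matrix n n ℂ // A.PosDef ∧ A.det = 1},
        (h A : Matrix n n ℂ) = ((A : Matrix n n ℂ).trace.re)⁻¹ • (A : Matrix n n ℂ) :=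
  ⟨{ toFun A := ⟨traceNormalize A, A.2.1.traceNormalize, A.2.1.trace_traceNormalize⟩
     invFun B := ⟨detNormalize B, B.2.1.detNormalize, B.2.1.det_detNormalize⟩
     left_inv A := Subtype.ext <|
       (detNormalize_real_smul (inv_pos.2 A.2.1.re_trace_pos) A.2.1.re_det_pos.le).trans
         (detNormalize_of_det_eq_one A.2.2)
     right_inv B := Subtype.ext <|
       (traceNormalize_real_smul (Real.rpow_pos_of_pos B.2.1.re_det_pos _).ne' _).trans
         (traceNormalize_of_trace_eq_one B.2.2)
     continuous_toFun := (continuousOn_traceNormalize.comp_continuous continuous_subtype_val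
       fun A => A.2.1.re_trace_pos.ne').subtype_mk _
     continuous_invFun := (continuousOn_detNormalize.comp_continuous continuous_subtype_val
       fun B => B.2.1.re_det_pos.ne').subtype_mk _ },
    fun _ => rfl⟩
end

section
/- Let V be a finite-dimensional real normed vector space, E ⊆ V a compact convex set, and A ⊆ E a convex subset such that A is dense in E (i.e. E is contained in the closure of A) and A is open in its affine hull (i.e. A is an open subset of the affine span of A with its subspace topology). Then A equals the relative interior (intrinsic interior) of E. -/
/-!
Since `E` is closed, it is the closure of `A`, so `E` and `A` have the same affine span and the
relatively open set `A` lies in the relative interior of `E`. Conversely, if `y` is relatively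
interior to `E` and `a ∈ A`, the ray from `a` through `y` stays in `E` slightly beyond `y`, at a
point `z ∈ closure A`; and as in the full-dimensional case, the open segment from a relatively
interior point `a` of the convex set `A` to a point `z` of its closure lies in `A`.
-/

open Set Filter Topology AffineMap

section AddTorsor

variable {𝕜 V P : Type*} [Ring 𝕜] [AddCommGroup V] [Module 𝕜 V] [TopologicalSpace P]
  [AddTorsor V P] {s t : Set P}

theorem mem_nhdsWithin_affineSpan_of_mem_intrinsicInterior {x : P}
    (hx : x ∈ intrinsicInterior 𝕜 s) : s ∈ 𝓝[(affineSpan 𝕜 s : Set P)] x := by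
  obtain ⟨p, hp, rfl⟩ := hx
  exact preimage_coe_mem_nhds_subtype.1 (mem_interior_iff_mem_nhds.1 hp)

theorem intrinsicInterior_eq_self_of_isOpen
    (hs : IsOpen ((↑) ⁻¹' s : Set (affineSpan 𝕜 s))) : intrinsicInterior 𝕜 s = s := by
  rw [intrinsicInterior, hs.interior_eq, image_preimage_eq_of_subset]
  simpa using subset_affineSpan 𝕜 s

theorem intrinsicInterior_mono_of_affineSpan_eq (hst : s ⊆ t)
    (hspan : affineSpan 𝕜 s = affineSpan 𝕜 t) : intrinsicInterior 𝕜 s ⊆ intrinsicInterior 𝕜 t := by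
  unfold intrinsicInterior
  rw [hspan]
  exact image_mono (interior_mono (preimage_mono hst))

end AddTorsor

section TopologicalVectorSpace

variable {V : Type*} [AddCommGroup V] [Module ℝ V] [TopologicalSpace V] [IsTopologicalAddGroup V]
  [ContinuousSMul ℝ V] {s : Set V}

theorem exists_one_lt_lineMap_mem_of_mem_intrinsicInterior {a y : V}
    (ha : a ∈ affineSpan ℝ s) (hy : y ∈ intrinsicInterior ℝ s) :
    ∃ r : ℝ, 1 < r ∧ lineMap a y r ∈ s := by
  have hy' : y ∈ affineSpan ℝ s := subset_affineSpan ℝ s (intrinsicInterior_subset hy)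
  have hray : Tendsto (fun r : ℝ ↦ lineMap a y r) (𝓝[>] 1) (𝓝[(affineSpan ℝ s : Set V)] y) := by
    refine tendsto_nhdsWithin_of_tendsto_nhds_of_eventually_within _ ?_ ?_
    · simpa using ((by fun_prop : Continuous fun r : ℝ ↦ lineMap a y r).tendsto 1).mono_left
        nhdsWithin_le_nhds
    · exact Eventually.of_forall fun r ↦ AffineMap.lineMap_mem r ha hy'
  have hmem := hray.eventually_mem (mem_nhdsWithin_affineSpan_of_mem_intrinsicInterior hy)
  obtain ⟨r, hrs, hr⟩ := (hmem.and self_mem_nhdsWithin).exists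
  exact ⟨r, hr, hrs⟩

theorem Convex.openSegment_intrinsicInterior_intrinsicClosure_subset (hs : Convex ℝ s) {x z : V}
    (hx : x ∈ intrinsicInterior ℝ s) (hz : z ∈ intrinsicClosure ℝ s) : openSegment ℝ x z ⊆ s := by
  rw [openSegment_eq_image_lineMap]
  rintro w ⟨θ, ⟨hθ₀, hθ₁⟩, rfl⟩
  have hx' : x ∈ affineSpan ℝ s := subset_affineSpan ℝ s (intrinsicInterior_subset hx)
  have hz' : z ∈ affineSpan ℝ s := intrinsicClosure_subset_affineSpan hz
  have hw : lineMap x z θ ∈ affineSpan ℝ s := AffineMap.lineMap_mem θ hx' hz'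
  have hθ : 1 - θ ≠ 0 := sub_ne_zero.2 hθ₁.ne'
  -- `b` is the homothety about `lineMap x z θ` sending `z` to `x`: for `c ∈ s` near `z`, the point
  -- `b c` is near `x`, and `lineMap x z θ` lies on the segment from `b c` to `c`.
  set b : V → V := fun c ↦ lineMap c (lineMap x z θ) (1 - θ)⁻¹
  have hbc : ∀ c, lineMap (b c) c θ = lineMap x z θ := fun c ↦ by
    rw [← lineMap_apply_one_sub, lineMap_lineMap_right, mul_inv_cancel₀ hθ, lineMap_apply_one]
  have hbz : b z = x := by
    simp only [b]
    rw [← lineMap_apply_one_sub z x, lineMap_lineMap_right, inv_mul_cancel₀ hθ, lineMap_apply_one]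
  have hb : Tendsto b (𝓝[s] z) (𝓝[(affineSpan ℝ s : Set V)] x) := by
    refine tendsto_nhdsWithin_of_tendsto_nhds_of_eventually_within _ ?_ ?_
    · simpa [hbz] using ((by fun_prop : Continuous b).tendsto z).mono_left nhdsWithin_le_nhds
    · exact eventually_mem_nhdsWithin.mono fun c hc ↦
        AffineMap.lineMap_mem _ (subset_affineSpan ℝ s hc) hw
  have : (𝓝[s] z).NeBot := mem_closure_iff_nhdsWithin_neBot.1 (intrinsicClosure_subset_closure hz)
  obtain ⟨c, hcs, hbcs⟩ := (eventually_mem_nhdsWithin.and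
    (hb.eventually_mem (mem_nhdsWithin_affineSpan_of_mem_intrinsicInterior hx))).exists
  rw [← hbc c]
  exact hs.lineMap_mem hbcs hcs ⟨hθ₀.le, hθ₁.le⟩

end TopologicalVectorSpace

theorem dense_relatively_open_convex_eq_intrinsicInterior_general
    {V : Type*} [NormedAddCommGroup V] [NormedSpace ℝ V] [FiniteDimensional ℝ V]
    {E A : Set V} (hEcomp : IsCompact E)
    (hAE : A ⊆ E) (hAconv : Convex ℝ A)
    (hdense : E ⊆ closure A)
    (hopen : IsOpen (Subtype.val ⁻¹' A : Set (affineSpan ℝ A))) :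
    A = intrinsicInterior ℝ E := by
  have hEA : E = closure A := hdense.antisymm (closure_minimal hAE hEcomp.isClosed)
  have hspan : affineSpan ℝ A = affineSpan ℝ E := by
    rw [hEA, ← intrinsicClosure_eq_closure ℝ, affineSpan_intrinsicClosure]
  have hA : intrinsicInterior ℝ A = A := intrinsicInterior_eq_self_of_isOpen hopen
  refine subset_antisymm (hA ▸ intrinsicInterior_mono_of_affineSpan_eq hAE hspan) fun y hy ↦ ?_
  obtain ⟨a, ha⟩ : A.Nonempty := closure_nonempty_iff.1 ⟨y, hdense (intrinsicInterior_subset hy)⟩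
  obtain ⟨r, hr, hrE⟩ :=
    exists_one_lt_lineMap_mem_of_mem_intrinsicInterior (hspan ▸ subset_affineSpan ℝ A ha) hy
  have hy_eq : lineMap a (lineMap a y r) r⁻¹ = y := by
    rw [lineMap_lineMap_right, inv_mul_cancel₀ (by positivity), lineMap_apply_one]
  refine hAconv.openSegment_intrinsicInterior_intrinsicClosure_subset (hA.symm ▸ ha)
    (by rwa [intrinsicClosure_eq_closure ℝ, ← hEA]) ?_
  have := lineMap_mem_openSegment ℝ a (lineMap a y r) ⟨by positivity, inv_lt_one_of_one_lt₀ hr⟩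
  rwa [hy_eq] at this

/-- If `E` is a compact convex set in a finite-dimensional real normed space
and `A ⊆ E` is a convex subset which is dense in `E` and open in its affine
hull, then `A` is the relative (intrinsic) interior of `E`. -/
theorem dense_relatively_open_convex_eq_intrinsicInterior
    {V : Type*} [NormedAddCommGroup V] [NormedSpace ℝ V] [FiniteDimensional ℝ V]
    {E A : Set V} (hEcomp : IsCompact E) (hEconv : Convex ℝ E)
    (hAE : A ⊆ E) (hAconv : Convex ℝ A)
    (hdense : E ⊆ closure A)
    (hopen : IsOpen (Subtype.val ⁻¹' A : Set (affineSpan ℝ A))) :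
    A = intrinsicInterior ℝ E :=
  dense_relatively_open_convex_eq_intrinsicInterior_general hEcomp hAE hAconv hdense hopen
end
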